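/- arXiv:2507.10965 — 5 statements merged into one kernel-verified Lean document; each statement's English description precedes it below -/
import Mathlib

section
/- For every integer d ≥ 2 and every natural number n, the number of partitions of n having no part divisible by d equals the number of partitions of n in which every part size occurs at most d − 1 times. -/
/-!
Both counts are the coefficients of `∏_{i ≥ 1} (1 - X^(d i)) / (1 - X^i)`: expanding each factor
as `1 / (1 - X^i)` for `d ∤ i` (after cancelling the factors with `d ∣ i`) counts the first kind,
expanding it as `1 + X^i + ⋯ + X^((d-1) i)` counts the second. This identity is Mathlib's
`Nat.Partition.card_restricted_eq_card_countRestricted`.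
-/

open Finset

namespace Nat.Partition

def equivMultisetSubtype (n : ℕ) (P : Multiset ℕ → Prop) :
    {p : n.Partition // P p.parts} ≃
      {s : Multiset ℕ // (∀ i ∈ s, 0 < i) ∧ P s ∧ s.sum = n} where
  toFun p := ⟨p.1.parts, fun _ => p.1.parts_pos, p.2, p.1.parts_sum⟩
  invFun s := ⟨⟨s.1, s.2.1 _, s.2.2.2⟩, s.2.2.1⟩
  left_inv _ := rfl
  right_inv _ := rfl

theorem natCard_multiset_subtype_eq_card_filter (n : ℕ) (P : Multiset ℕ → Prop)
    [DecidablePred P] :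
    Nat.card {s : Multiset ℕ // (∀ i ∈ s, 0 < i) ∧ P s ∧ s.sum = n} =
      #{p : n.Partition | P p.parts} := by
  rw [← Nat.card_congr (equivMultisetSubtype n P), Nat.card_eq_fintype_card,
    Fintype.card_subtype]

end Nat.Partition

theorem Multiset.forall_count_le_pred_iff {α : Type*} [DecidableEq α] {s : Multiset α} {m : ℕ}
    (hm : 0 < m) : (∀ a, s.count a ≤ m - 1) ↔ ∀ a ∈ s, s.count a < m := by
  refine ⟨fun h a _ => by have := h a; omega, fun h a => ?_⟩
  by_cases ha : a ∈ s
  · have := h a ha; omega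
  · simp [Multiset.count_eq_zero_of_notMem ha]

/-- Glaisher's theorem: for every integer `d ≥ 2` and every natural number `n`,
the number of partitions of `n` with no part divisible by `d` equals the number of
partitions of `n` in which every part size occurs at most `d - 1` times.
Partitions of `n` are encoded as multisets of positive integers with sum `n`. -/
theorem glaisher (d : ℕ) (hd : 2 ≤ d) (n : ℕ) :
    Nat.card {lam : Multiset ℕ //
      (∀ i ∈ lam, 0 < i) ∧ (∀ i ∈ lam, ¬ d ∣ i) ∧ lam.sum = n} =
    Nat.card {lam : Multiset ℕ //
      (∀ i ∈ lam, 0 < i) ∧ (∀ i, lam.count i ≤ d - 1) ∧ lam.sum = n} := by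
  have hd₀ : 0 < d := by omega
  simp only [Multiset.forall_count_le_pred_iff hd₀]
  rw [Nat.Partition.natCard_multiset_subtype_eq_card_filter,
    Nat.Partition.natCard_multiset_subtype_eq_card_filter]
  exact Nat.Partition.card_restricted_eq_card_countRestricted n hd₀
end

section
/- For every natural number n and every integer s, the number of pairs (μ, ν) of partitions into distinct odd parts with |μ| + |ν| = n and ℓ(μ) − ℓ(ν) = s equals the number of partitions of n − s² into even parts; in particular this count is 0 when s² > n. -/
/-!
Encode a pair `(μ, ν)` of partitions into distinct odd parts as the set
`X = μ ∪ ({-1, -3, -5, …} \ -ν)` of odd integers (a Maya diagram). The involution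
`reflect : X ↦ {odd integers} \ (-2 - X)` sends weight `W` and charge `d = ℓ(μ) - ℓ(ν)`
to weight `W + 2d + 1` and charge `-d - 1`; together with the symmetry `(μ, ν) ↦ (ν, μ)` this
shows that the number of pairs of weight `W` and charge `d` depends only on `W - d²`.
In charge `0`, the halves `(a_i)` and `(b_i)` of `μ = (2a_i + 1)` and `ν = (2b_i + 1)` are the
Frobenius coordinates of a partition of `W / 2`, and doubling its parts gives a partition of `W`
into even parts.
-/

namespace JacobiTripleProduct

open Multiset

theorem _root_.Multiset.sup_mem {α : Type*} [LinearOrder α] [OrderBot α] {l : Multiset α}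
    (hl : l ≠ 0) : l.sup ∈ l := by
  obtain ⟨y, hy, hmax⟩ := l.exists_max_image id hl
  rwa [le_antisymm (sup_le.2 hmax) (le_sup hy)]

theorem _root_.Multiset.map_map_eq_self {α β : Type*} {m : Multiset α} {f : α → β}
    {g : β → α} (h : ∀ x ∈ m, g (f x) = x) : (m.map f).map g = m := by
  rw [map_map]
  exact (map_congr rfl h).trans (map_id m)

theorem sum_map_sub_const_add (m : Multiset ℕ) {k : ℕ} (h : ∀ x ∈ m, k ≤ x) :
    (m.map (· - k)).sum + k * card m = m.sum := by
  induction m using Multiset.induction_on with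
  | empty => simp
  | cons a m ih =>
    have := ih fun x hx => h x (mem_cons_of_mem hx)
    have := h a (mem_cons_self a m)
    simp only [map_cons, sum_cons, card_cons]
    lia

theorem sum_map_add_const (m : Multiset ℕ) (k : ℕ) :
    (m.map (· + k)).sum = m.sum + k * card m := by
  simp [sum_map_add, mul_comm]

/-- The Young diagram of `m` surrounded by a hook with arm `a` and leg `b`: a new first row
of length `a + 1` and a new first column of length `b + 1`. -/
def addHook (a b : ℕ) (m : Multiset ℕ) : Multiset ℕ :=
  (a + 1) ::ₘ (m.map (· + 1) + replicate (b - card m) 1)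

def removeHook (l : Multiset ℕ) : Multiset ℕ :=
  ((l.erase l.sup).filter (2 ≤ ·)).map (· - 1)

section Hook

variable {a b : ℕ} {m l : Multiset ℕ}

theorem addHook_ne_zero : addHook a b m ≠ 0 := cons_ne_zero

theorem card_addHook (h : card m ≤ b) : card (addHook a b m) = b + 1 := by
  simp only [addHook, card_cons, card_add, card_map, card_replicate]
  lia

theorem sum_addHook (h : card m ≤ b) : (addHook a b m).sum = m.sum + a + b + 1 := by
  simp only [addHook, sum_cons, sum_add, sum_map_add_const, sum_replicate, smul_eq_mul]
  lia

theorem pos_of_mem_addHook {x : ℕ} (hx : x ∈ addHook a b m) : 0 < x := by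
  simp only [addHook, mem_cons, mem_add, mem_map, mem_replicate] at hx
  lia

theorem le_of_mem_addHook (hm : ∀ y ∈ m, y ≤ a) {x : ℕ} (hx : x ∈ addHook a b m) :
    x ≤ a + 1 := by
  simp only [addHook, mem_cons, mem_add, mem_map, mem_replicate] at hx
  rcases hx with rfl | ⟨y, hy, rfl⟩ | ⟨-, rfl⟩
  · rfl
  · exact Nat.succ_le_succ (hm y hy)
  · lia

theorem sup_addHook (hm : ∀ y ∈ m, y ≤ a) : (addHook a b m).sup = a + 1 :=
  le_antisymm (sup_le.2 fun _ => le_of_mem_addHook hm) (le_sup (mem_cons_self _ _))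

theorem removeHook_addHook (hm : ∀ y ∈ m, y ≤ a) (hpos : ∀ y ∈ m, 0 < y) :
    removeHook (addHook a b m) = m := by
  have hbig : ((m.map (· + 1)).filter (2 ≤ ·)) = m.map (· + 1) :=
    filter_eq_self.2 fun x hx => by
      obtain ⟨y, hy, rfl⟩ := mem_map.1 hx
      have := hpos y hy
      lia
  have hones : (replicate (b - card m) 1).filter (2 ≤ ·) = 0 :=
    filter_eq_nil.2 fun x hx => by rw [eq_of_mem_replicate hx]; lia
  rw [removeHook, sup_addHook hm, addHook, erase_cons_head, filter_add, hbig, hones, add_zero]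
  exact map_map_eq_self fun x _ => Nat.add_sub_cancel x 1

theorem le_sup_sub_one_of_mem_removeHook {x : ℕ} (hx : x ∈ removeHook l) : x ≤ l.sup - 1 := by
  obtain ⟨y, hy, rfl⟩ := mem_map.1 hx
  have := le_sup (mem_of_mem_erase (mem_filter.1 hy).1)
  lia

theorem card_removeHook_le : card (removeHook l) ≤ card l - 1 := by
  rw [removeHook, card_map]
  refine (card_le_card (filter_le _ _)).trans ?_
  rcases eq_or_ne l 0 with rfl | hl
  · simp
  · exact Nat.le_sub_one_of_lt (card_erase_lt_of_mem (sup_mem hl))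

theorem addHook_removeHook (hl : ∀ x ∈ l, 0 < x) (hne : l ≠ 0) :
    addHook (l.sup - 1) (card l - 1) (removeHook l) = l := by
  set l₀ := l.erase l.sup
  have hbig : (removeHook l).map (· + 1) = l₀.filter (2 ≤ ·) :=
    map_map_eq_self fun x hx => Nat.sub_add_cancel ((mem_filter.1 hx).2.trans' (by norm_num))
  have hones : replicate (card l - 1 - card (removeHook l)) 1 = l₀.filter (¬ 2 ≤ ·) := by
    refine (eq_replicate.2 ⟨?_, fun x hx => ?_⟩).symm
    · have hsplit := congrArg card (filter_add_not (2 ≤ ·) l₀)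
      have := card_erase_add_one (sup_mem hne)
      rw [card_add] at hsplit
      rw [removeHook, card_map]
      lia
    · have := hl x (mem_of_mem_erase (mem_filter.1 hx).1)
      have := (mem_filter.1 hx).2
      lia
  have hsup : l.sup - 1 + 1 = l.sup := Nat.sub_add_cancel (hl _ (sup_mem hne))
  rw [addHook, hbig, hones, filter_add_not, hsup]
  exact cons_erase (sup_mem hne)

end Hook

def frobeniusPartition : List ℕ → List ℕ → Multiset ℕ
  | a :: A, b :: B => addHook a b (frobeniusPartition A B)
  | _, _ => 0

inductive IsFrobeniusCoords : List ℕ → List ℕ → Prop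
  | nil : IsFrobeniusCoords [] []
  | cons {a b : ℕ} {A B : List ℕ} (ha : ∀ x ∈ A, x < a) (hb : ∀ x ∈ B, x < b)
      (h : IsFrobeniusCoords A B) : IsFrobeniusCoords (a :: A) (b :: B)

theorem _root_.List.sortedGT_cons {α : Type*} [Preorder α] {a : α} {l : List α} :
    (a :: l).SortedGT ↔ (∀ x ∈ l, x < a) ∧ l.SortedGT := by
  simp only [List.sortedGT_iff_pairwise, List.pairwise_cons, gt_iff_lt]

theorem isFrobeniusCoords_iff {A B : List ℕ} :
    IsFrobeniusCoords A B ↔ A.SortedGT ∧ B.SortedGT ∧ A.length = B.length := by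
  constructor
  · intro h
    induction h with
    | nil => simp [List.sortedGT_iff_pairwise]
    | cons ha hb _ ih =>
      simp only [List.sortedGT_cons, List.length_cons]
      exact ⟨⟨ha, ih.1⟩, ⟨hb, ih.2.1⟩, by rw [ih.2.2]⟩
  · induction A generalizing B with
    | nil =>
      rintro ⟨-, -, hlen⟩
      rw [List.eq_nil_of_length_eq_zero hlen.symm]
      exact .nil
    | cons a A ih =>
      cases B with
      | nil => simp
      | cons b B =>
        simp only [List.sortedGT_cons, List.length_cons, Nat.add_right_cancel_iff]
        rintro ⟨⟨ha, hA⟩, ⟨hb, hB⟩, hlen⟩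
        exact .cons ha hb (ih ⟨hA, hB, hlen⟩)

section Frobenius

variable {A B : List ℕ}

theorem pos_of_mem_frobeniusPartition {x : ℕ} (hx : x ∈ frobeniusPartition A B) :
    0 < x := by
  fun_induction frobeniusPartition A B with
  | case1 => exact pos_of_mem_addHook hx
  | case2 => simp at hx

theorem le_of_mem_frobeniusPartition (h : IsFrobeniusCoords A B) {a : ℕ}
    (hA : ∀ x ∈ A, x < a) : ∀ y ∈ frobeniusPartition A B, y ≤ a := by
  induction h generalizing a with
  | nil => simp [frobeniusPartition]
  | cons ha _ _ ih =>
    exact fun y hy => (le_of_mem_addHook (ih ha) hy).trans (hA _ (List.mem_cons_self ..))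

theorem card_frobeniusPartition_le (h : IsFrobeniusCoords A B) {b : ℕ} (hB : ∀ x ∈ B, x < b) :
    card (frobeniusPartition A B) ≤ b := by
  induction h generalizing b with
  | nil => simp [frobeniusPartition]
  | cons _ hb _ ih =>
    rw [frobeniusPartition, card_addHook (ih hb)]
    exact hB _ (List.mem_cons_self ..)

theorem sum_frobeniusPartition (h : IsFrobeniusCoords A B) :
    (frobeniusPartition A B).sum = A.sum + B.sum + A.length := by
  induction h with
  | nil => rfl
  | cons _ hb h ih =>
    rw [frobeniusPartition, sum_addHook (card_frobeniusPartition_le h hb), ih]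
    simp only [List.sum_cons, List.length_cons]
    lia

theorem lt_sup_frobeniusPartition (h : IsFrobeniusCoords A B) {x : ℕ} (hx : x ∈ A) :
    x < (frobeniusPartition A B).sup := by
  cases h with
  | nil => simp at hx
  | cons ha _ h =>
    rw [frobeniusPartition, sup_addHook (le_of_mem_frobeniusPartition h ha)]
    rcases List.mem_cons.1 hx with rfl | hx
    · lia
    · exact (ha x hx).trans (Nat.lt_succ_self _)

theorem lt_card_frobeniusPartition (h : IsFrobeniusCoords A B) {x : ℕ} (hx : x ∈ B) :
    x < card (frobeniusPartition A B) := by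
  cases h with
  | nil => simp at hx
  | cons _ hb h =>
    rw [frobeniusPartition, card_addHook (card_frobeniusPartition_le h hb)]
    rcases List.mem_cons.1 hx with rfl | hx
    · lia
    · exact (hb x hx).trans (Nat.lt_succ_self _)

theorem eq_of_frobeniusPartition_eq {A' B' : List ℕ} (h : IsFrobeniusCoords A B)
    (h' : IsFrobeniusCoords A' B') (heq : frobeniusPartition A B = frobeniusPartition A' B') :
    A = A' ∧ B = B' := by
  induction h generalizing A' B' with
  | nil =>
    cases h' with
    | nil => exact ⟨rfl, rfl⟩
    | cons => exact absurd heq.symm addHook_ne_zero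
  | @cons a b A B ha hb h ih =>
    cases h' with
    | nil => exact absurd heq addHook_ne_zero
    | @cons a' b' A' B' ha' hb' h' =>
      have hm := le_of_mem_frobeniusPartition h ha
      have hm' := le_of_mem_frobeniusPartition h' ha'
      simp only [frobeniusPartition] at heq
      have hsup := congrArg Multiset.sup heq
      rw [sup_addHook hm, sup_addHook hm'] at hsup
      have hcard := congrArg card heq
      rw [card_addHook (card_frobeniusPartition_le h hb),
        card_addHook (card_frobeniusPartition_le h' hb')] at hcard
      have hinner := congrArg removeHook heq
      rw [removeHook_addHook hm fun _ => pos_of_mem_frobeniusPartition,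
        removeHook_addHook hm' fun _ => pos_of_mem_frobeniusPartition] at hinner
      obtain ⟨rfl, rfl⟩ := ih h' hinner
      exact ⟨by rw [Nat.succ_injective hsup], by rw [Nat.succ_injective hcard]⟩

theorem exists_frobeniusPartition_eq {l : Multiset ℕ} (hl : ∀ x ∈ l, 0 < x) :
    ∃ A B, IsFrobeniusCoords A B ∧ frobeniusPartition A B = l := by
  induction hc : card l using Nat.strong_induction_on generalizing l with
  | _ c ih =>
    rcases eq_or_ne l 0 with rfl | hne
    · exact ⟨[], [], .nil, rfl⟩
    have hinner_pos : ∀ x ∈ removeHook l, 0 < x := fun x hx => by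
      obtain ⟨y, hy, rfl⟩ := mem_map.1 hx
      have := (mem_filter.1 hy).2
      lia
    have hlt : card (removeHook l) < c := by
      have := card_removeHook_le (l := l)
      have := card_pos.2 hne
      lia
    obtain ⟨A, B, h, hAB⟩ := ih _ hlt hinner_pos rfl
    refine ⟨(l.sup - 1) :: A, (card l - 1) :: B, .cons (fun x hx => ?_) (fun x hx => ?_) h, ?_⟩
    · have := lt_sup_frobeniusPartition h hx
      rw [hAB] at this
      have := sup_le.2 fun _ => le_sup_sub_one_of_mem_removeHook (l := l)
      lia
    · have := lt_card_frobeniusPartition h hx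
      rw [hAB] at this
      have := card_removeHook_le (l := l)
      lia
    · rw [frobeniusPartition, hAB, addHook_removeHook hl hne]

end Frobenius

def IsDistinctOdd (μ : Multiset ℕ) : Prop := (∀ i ∈ μ, Odd i) ∧ μ.Nodup

def oddPairs (W d : ℤ) : Set (Multiset ℕ × Multiset ℕ) :=
  {p | IsDistinctOdd p.1 ∧ IsDistinctOdd p.2 ∧ (p.1.sum + p.2.sum : ℤ) = W ∧
    (card p.1 : ℤ) - card p.2 = d}

def evenPartitions (W : ℤ) : Set (Multiset ℕ) :=
  {l | (∀ i ∈ l, 0 < i ∧ Even i) ∧ (l.sum : ℤ) = W}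

section OddCoding

def oddMultiset (A : List ℕ) : Multiset ℕ := (A.map (2 * · + 1) : List ℕ)

variable {A : List ℕ}

theorem card_oddMultiset : card (oddMultiset A) = A.length := by
  simp [oddMultiset]

theorem sum_oddMultiset : (oddMultiset A).sum = 2 * A.sum + A.length := by
  induction A with
  | nil => rfl
  | cons a A ih =>
    simp only [oddMultiset, List.map_cons, ← cons_coe, sum_cons] at ih ⊢
    simp only [ih, List.sum_cons, List.length_cons]
    ring

theorem isDistinctOdd_oddMultiset (hA : A.SortedGT) : IsDistinctOdd (oddMultiset A) := by
  refine ⟨fun i hi => ?_, coe_nodup.2 ((hA.nodup.map fun x y h => by lia))⟩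
  obtain ⟨x, -, rfl⟩ := List.mem_map.1 (mem_coe.1 hi)
  exact odd_two_mul_add_one x

theorem exists_oddMultiset_eq {μ : Multiset ℕ} (hμ : IsDistinctOdd μ) :
    ∃ A : List ℕ, A.SortedGT ∧ oddMultiset A = μ := by
  have hhalf : (μ.map (· / 2)).Nodup := hμ.2.map_on fun x hx y hy h => by
    obtain ⟨j, rfl⟩ := hμ.1 x hx
    obtain ⟨k, rfl⟩ := hμ.1 y hy
    lia
  refine ⟨(μ.map (· / 2)).sort (· ≥ ·), ?_, ?_⟩
  · refine (pairwise_sort _ _).sortedGE.sortedGT_of_nodup ?_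
    rwa [← coe_nodup, sort_eq]
  · rw [oddMultiset, ← map_coe, sort_eq]
    exact map_map_eq_self fun x hx => by
      obtain ⟨k, rfl⟩ := hμ.1 x hx
      lia

theorem oddMultiset_injOn : {A : List ℕ | A.SortedGT}.InjOn oddMultiset := by
  intro A hA A' hA' h
  rw [oddMultiset, oddMultiset, ← map_coe, ← map_coe] at h
  exact (coe_eq_coe.1 (map_injective (fun x y h => by lia) h)).eq_of_sortedGE
    hA.sortedGE hA'.sortedGE

end OddCoding

section ZeroCharge

variable (W : ℤ)

def frobeniusCoords : Set (List ℕ × List ℕ) :=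
  {q | IsFrobeniusCoords q.1 q.2 ∧ 2 * ((q.1.sum + q.2.sum + q.1.length : ℕ) : ℤ) = W}

def halfPartitions : Set (Multiset ℕ) :=
  {l | (∀ x ∈ l, 0 < x) ∧ 2 * (l.sum : ℤ) = W}

theorem image_oddMultiset :
    Prod.map oddMultiset oddMultiset '' frobeniusCoords W = oddPairs W 0 := by
  ext ⟨μ, ν⟩
  constructor
  · rintro ⟨⟨A, B⟩, ⟨hAB, hW⟩, hcode⟩
    simp only [Prod.map, Prod.mk.injEq] at hcode
    obtain ⟨rfl, rfl⟩ := hcode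
    obtain ⟨hA, hB, hlen⟩ := isFrobeniusCoords_iff.1 hAB
    refine ⟨isDistinctOdd_oddMultiset hA, isDistinctOdd_oddMultiset hB, ?_, ?_⟩
    · simp only [sum_oddMultiset, ← hlen] at hW ⊢
      push_cast at hW ⊢
      lia
    · simp [card_oddMultiset, hlen]
  · rintro ⟨hμ, hν, hW, hd⟩
    obtain ⟨A, hA, rfl⟩ := exists_oddMultiset_eq hμ
    obtain ⟨B, hB, rfl⟩ := exists_oddMultiset_eq hν
    simp only [card_oddMultiset, sub_eq_zero, Nat.cast_inj] at hd
    refine ⟨(A, B), ⟨isFrobeniusCoords_iff.2 ⟨hA, hB, hd⟩, ?_⟩, rfl⟩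
    simp only [sum_oddMultiset, ← hd] at hW
    push_cast at hW ⊢
    lia

theorem image_frobeniusPartition :
    (fun q => frobeniusPartition q.1 q.2) '' frobeniusCoords W = halfPartitions W := by
  ext l
  constructor
  · rintro ⟨⟨A, B⟩, ⟨hAB, hW⟩, rfl⟩
    exact ⟨fun _ => pos_of_mem_frobeniusPartition, by rwa [sum_frobeniusPartition hAB]⟩
  · rintro ⟨hpos, hW⟩
    obtain ⟨A, B, hAB, rfl⟩ := exists_frobeniusPartition_eq hpos
    exact ⟨(A, B), ⟨hAB, by rwa [← sum_frobeniusPartition hAB]⟩, rfl⟩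

theorem image_map_two_mul : map (2 * ·) '' halfPartitions W = evenPartitions W := by
  ext l
  constructor
  · rintro ⟨m, ⟨hpos, hW⟩, rfl⟩
    refine ⟨fun i hi => ?_, ?_⟩
    · obtain ⟨x, hx, rfl⟩ := mem_map.1 hi
      exact ⟨by have := hpos x hx; lia, even_two_mul x⟩
    · rw [sum_map_mul_left, map_id']
      exact_mod_cast hW
  · rintro ⟨heven, hW⟩
    have hhalf : (l.map (· / 2)).map (2 * ·) = l := map_map_eq_self fun x hx => by
      obtain ⟨-, k, rfl⟩ := heven x hx
      lia
    refine ⟨l.map (· / 2), ⟨fun x hx => ?_, ?_⟩, hhalf⟩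
    · obtain ⟨y, hy, rfl⟩ := mem_map.1 hx
      obtain ⟨hy, k, rfl⟩ := heven y hy
      lia
    · rw [← hW, ← congrArg Multiset.sum hhalf, sum_map_mul_left, map_id']
      push_cast
      rfl

theorem card_oddPairs_zero : Nat.card (oddPairs W 0) = Nat.card (evenPartitions W) := by
  have hinj : (frobeniusCoords W).InjOn (Prod.map oddMultiset oddMultiset) :=
    fun p hp q hq h => by
      obtain ⟨hA, hB, -⟩ := isFrobeniusCoords_iff.1 hp.1
      obtain ⟨hA', hB', -⟩ := isFrobeniusCoords_iff.1 hq.1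
      exact Prod.ext (oddMultiset_injOn hA hA' (congrArg Prod.fst h))
        (oddMultiset_injOn hB hB' (congrArg Prod.snd h))
  rw [← image_oddMultiset, Nat.card_image_of_injOn hinj, ← image_map_two_mul,
    Nat.card_image_of_injective (map_injective fun x y h => by lia), ← image_frobeniusPartition,
    Nat.card_image_of_injOn fun p hp q hq h =>
      Prod.ext_iff.2 (eq_of_frobeniusPartition_eq hp.1 hq.1 h)]

end ZeroCharge

section Reflect

variable {μ : Multiset ℕ}

theorem IsDistinctOdd.three_le_of_mem_erase_one (h : IsDistinctOdd μ) {x : ℕ}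
    (hx : x ∈ μ.erase 1) : 3 ≤ x := by
  obtain ⟨k, hk⟩ := h.1 x (mem_of_mem_erase hx)
  have : x ≠ 1 := by
    rintro rfl
    exact h.2.notMem_erase hx
  lia

theorem IsDistinctOdd.map_add_two (h : IsDistinctOdd μ) : IsDistinctOdd (μ.map (· + 2)) := by
  refine ⟨fun i hi => ?_, h.2.map fun x y h => by lia⟩
  obtain ⟨x, hx, rfl⟩ := mem_map.1 hi
  exact (h.1 x hx).add_even even_two

theorem IsDistinctOdd.cons_one_map_add_two (h : IsDistinctOdd μ) :
    IsDistinctOdd (1 ::ₘ μ.map (· + 2)) := by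
  refine ⟨fun i hi => ?_, nodup_cons.2 ⟨fun h1 => ?_, h.map_add_two.2⟩⟩
  · rcases mem_cons.1 hi with rfl | hi
    · exact odd_one
    · exact h.map_add_two.1 i hi
  · obtain ⟨x, -, hx⟩ := mem_map.1 h1
    lia

theorem IsDistinctOdd.erase_one_map_sub_two (h : IsDistinctOdd μ) :
    IsDistinctOdd ((μ.erase 1).map (· - 2)) := by
  refine ⟨fun i hi => ?_, (h.2.erase 1).map_on fun x hx y hy hxy => ?_⟩
  · obtain ⟨x, hx, rfl⟩ := mem_map.1 hi
    obtain ⟨k, hk⟩ := h.1 x (mem_of_mem_erase hx)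
    have := h.three_le_of_mem_erase_one hx
    exact ⟨k - 1, by lia⟩
  · have := h.three_le_of_mem_erase_one hx
    have := h.three_le_of_mem_erase_one hy
    lia

def reflect (p : Multiset ℕ × Multiset ℕ) : Multiset ℕ × Multiset ℕ :=
  if 1 ∈ p.2 then ((p.2.erase 1).map (· - 2), p.1.map (· + 2))
  else (p.2.map (· - 2), 1 ::ₘ p.1.map (· + 2))

theorem reflect_reflect {p : Multiset ℕ × Multiset ℕ} (h : ∀ x ∈ p.2.erase 1, 2 ≤ x) :
    reflect (reflect p) = p := by
  obtain ⟨μ, ν⟩ := p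
  have hμ : (μ.map (· + 2)).map (· - 2) = μ :=
    map_map_eq_self fun x _ => Nat.add_sub_cancel x 2
  have hν : ((ν.erase 1).map (· - 2)).map (· + 2) = ν.erase 1 :=
    map_map_eq_self fun x hx => Nat.sub_add_cancel (h x hx)
  have h1 : (1 : ℕ) ∉ μ.map (· + 2) := fun h1 => by
    obtain ⟨x, -, hx⟩ := mem_map.1 h1
    lia
  by_cases hν1 : 1 ∈ ν
  · simp only [reflect, hν1, if_true, h1, if_false, erase_of_notMem h1, hμ, hν,
      cons_erase hν1]
  · rw [erase_of_notMem hν1] at hν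
    simp only [reflect, hν1, if_false, mem_cons_self, if_true, erase_cons_head, hμ, hν]

theorem reflect_mem_oddPairs {W d W' d' : ℤ} {p : Multiset ℕ × Multiset ℕ}
    (hp : p ∈ oddPairs W d) (hd : d + d' + 1 = 0) (hW : W + d = W' + d') :
    reflect p ∈ oddPairs W' d' := by
  obtain ⟨μ, ν⟩ := p
  obtain ⟨hμ, hν, hsum, hcard⟩ := hp
  dsimp only at hsum hcard
  have hlow := sum_map_sub_const_add (ν.erase 1) fun x hx =>
    (hν.three_le_of_mem_erase_one hx).trans' (by norm_num : 2 ≤ 3)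
  have hhigh := sum_map_add_const μ 2
  by_cases hν1 : 1 ∈ ν
  · have := sum_erase hν1
    have := card_erase_add_one hν1
    simp only [reflect, hν1, if_true]
    refine ⟨hν.erase_one_map_sub_two, hμ.map_add_two, ?_, ?_⟩ <;>
      simp only [card_map] <;> lia
  · rw [erase_of_notMem hν1] at hlow
    simp only [reflect, hν1, if_false]
    refine ⟨by simpa [erase_of_notMem hν1] using hν.erase_one_map_sub_two,
      hμ.cons_one_map_add_two, ?_, ?_⟩ <;> simp only [sum_cons, card_cons, card_map] <;> lia

end Reflect

theorem card_oddPairs_reflect {W d W' d' : ℤ} (hd : d + d' + 1 = 0) (hW : W + d = W' + d') :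
    Nat.card (oddPairs W d) = Nat.card (oddPairs W' d') :=
  Nat.card_congr
    { toFun := fun p => ⟨reflect p, reflect_mem_oddPairs p.2 hd hW⟩
      invFun := fun q => ⟨reflect q, reflect_mem_oddPairs q.2 (by lia) (by lia)⟩
      left_inv := fun p => Subtype.ext <| reflect_reflect fun _ hx =>
        (p.2.2.1.three_le_of_mem_erase_one hx).trans' (by norm_num)
      right_inv := fun q => Subtype.ext <| reflect_reflect fun _ hx =>
        (q.2.2.1.three_le_of_mem_erase_one hx).trans' (by norm_num) }

theorem card_oddPairs_neg (W d : ℤ) : Nat.card (oddPairs W (-d)) = Nat.card (oddPairs W d) := by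
  have : Prod.swap '' oddPairs W d = oddPairs W (-d) := by
    rw [Set.image_swap_eq_preimage_swap]
    ext ⟨μ, ν⟩
    simp only [oddPairs, Set.mem_preimage, Prod.swap_prod_mk, Set.mem_ofPred_eq]
    constructor <;> rintro ⟨h1, h2, h3, h4⟩ <;> exact ⟨h2, h1, by lia, by lia⟩
  rw [← this, Nat.card_image_of_injective Prod.swap_injective]

theorem card_oddPairs_succ (W d : ℤ) :
    Nat.card (oddPairs W (d + 1)) = Nat.card (oddPairs (W - (2 * d + 1)) d) := by
  rw [← card_oddPairs_neg, card_oddPairs_reflect (W' := W - (2 * d + 1)) (d' := d) (by ring)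
    (by ring)]

theorem card_oddPairs (W s : ℤ) :
    Nat.card (oddPairs W s) = Nat.card (evenPartitions (W - s ^ 2)) := by
  induction s using Int.induction_on generalizing W with
  | zero => simpa using card_oddPairs_zero W
  | succ d ih =>
    rw [card_oddPairs_succ, ih]
    congr 3
    ring
  | pred d ih =>
    have h := card_oddPairs_succ (W + (2 * (-d - 1) + 1)) (-d - 1)
    rw [sub_add_cancel, add_sub_cancel_right, ih] at h
    rw [← h]
    congr 3
    ring

end JacobiTripleProduct

/-- Jacobi triple product, bijectively: for every `n : ℕ` and `s : ℤ`, the number of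
pairs `(μ, ν)` of partitions into distinct odd parts with `|μ| + |ν| = n` and
`ℓ(μ) - ℓ(ν) = s` equals the number of partitions of `n - s²` into (positive) even
parts; in particular this count is `0` when `s² > n`. -/
theorem jacobi_triple_product_bijective (n : ℕ) (s : ℤ) :
    Nat.card {p : Multiset ℕ × Multiset ℕ //
      (∀ i ∈ p.1, Odd i) ∧ p.1.Nodup ∧
      (∀ i ∈ p.2, Odd i) ∧ p.2.Nodup ∧
      p.1.sum + p.2.sum = n ∧
      (Multiset.card p.1 : ℤ) - (Multiset.card p.2 : ℤ) = s} =
    Nat.card {lam : Multiset ℕ //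
      (∀ i ∈ lam, 0 < i ∧ Even i) ∧ (lam.sum : ℤ) = (n : ℤ) - s ^ 2} := by
  refine Eq.trans (Nat.card_congr (Equiv.subtypeEquivRight fun p => ?_))
    (JacobiTripleProduct.card_oddPairs n s)
  simp only [JacobiTripleProduct.oddPairs, JacobiTripleProduct.IsDistinctOdd, Set.mem_ofPred_eq,
    and_assoc]
  norm_cast
end

section
/- For every natural number n, the number of partitions of n into odd parts in which every part size occurs at most three times equals the sum over all i + j = n of (the number of partitions of i into distinct odd parts) times (the number of partitions of j into distinct parts congruent to 2 modulo 4). -/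
/-!
Writing each multiplicity `m ≤ 3` as `m = ε + 2δ` with `ε, δ ∈ {0, 1}` splits a partition `λ`
uniquely as `μ + 2 • κ` with `μ` and `κ` into distinct parts, both odd when `λ` is. Doubling the
parts of `κ` turns distinct odd parts of total `t` into distinct parts `≡ 2 (mod 4)` of total
`2t`, and counting the pairs `(μ, 2κ)` by the sizes of their components gives the convolution.
-/

theorem Nat.card_subtype_prod_eq_sum_antidiagonal {X Y : Type*} (P : X → Prop) (Q : Y → Prop)
    (f : X → ℕ) (g : Y → ℕ) [∀ k, Finite {x // P x ∧ f x = k}]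
    [∀ k, Finite {y // Q y ∧ g y = k}] (n : ℕ) :
    Nat.card {p : X × Y // P p.1 ∧ Q p.2 ∧ f p.1 + g p.2 = n} =
      ∑ p ∈ Finset.HasAntidiagonal.antidiagonal n,
        Nat.card {x // P x ∧ f x = p.1} * Nat.card {y // Q y ∧ g y = p.2} := by
  let e : {p : X × Y // P p.1 ∧ Q p.2 ∧ f p.1 + g p.2 = n} ≃
      Σ q : Finset.HasAntidiagonal.antidiagonal n,
        {x // P x ∧ f x = q.1.1} × {y // Q y ∧ g y = q.1.2} :=
    { toFun := fun p =>
        ⟨⟨(f p.1.1, g p.1.2), Finset.HasAntidiagonal.mem_antidiagonal.2 p.2.2.2⟩,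
        ⟨p.1.1, p.2.1, rfl⟩, ⟨p.1.2, p.2.2.1, rfl⟩⟩
      invFun := fun q => ⟨(q.2.1.1, q.2.2.1), q.2.1.2.1, q.2.2.2.1, by
        rw [q.2.1.2.2, q.2.2.2.2]; exact Finset.HasAntidiagonal.mem_antidiagonal.1 q.1.2⟩
      left_inv := fun _ => rfl
      right_inv := by
        rintro ⟨⟨⟨a, b⟩, _⟩, ⟨x, hx, hfx : f x = a⟩, ⟨y, hy, hgy : g y = b⟩⟩
        subst hfx hgy
        rfl }
  rw [Nat.card_congr e, Nat.card_sigma]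
  simp only [Nat.card_prod]
  exact Finset.sum_coe_sort (Finset.HasAntidiagonal.antidiagonal n) fun p =>
    Nat.card {x // P x ∧ f x = p.1} * Nat.card {y // Q y ∧ g y = p.2}

theorem Nat.two_mul_mod_four_eq_two_iff_odd (i : ℕ) : 2 * i % 4 = 2 ↔ Odd i := by
  rw [Nat.odd_iff]; omega

namespace Multiset

section Decomposition

variable {α : Type*} [DecidableEq α]

noncomputable def mapCount (f : ℕ → ℕ) (hf : f 0 = 0) (s : Multiset α) : Multiset α :=
  Finsupp.toMultiset (Finsupp.mapRange f hf (toFinsupp s))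

@[simp]
theorem count_mapCount (f : ℕ → ℕ) (hf : f 0 = 0) (s : Multiset α) (a : α) :
    count a (mapCount f hf s) = f (count a s) := by
  simp [mapCount, toFinsupp_apply]

@[simps symm_apply]
noncomputable def equivNodupAddTwoNsmul :
    Multiset α ≃ {p : Multiset α × Multiset α // p.1.Nodup} where
  toFun s := ⟨(mapCount (· % 2) rfl s, mapCount (· / 2) (Nat.zero_div 2) s),
    nodup_iff_count_le_one.2 fun a => by simp only [count_mapCount]; omega⟩
  invFun p := p.1.1 + 2 • p.1.2
  left_inv s := ext.2 fun a => by simp [Nat.mod_add_div]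
  right_inv := by
    rintro ⟨⟨μ, κ⟩, hμ⟩
    have := nodup_iff_count_le_one.1 hμ
    ext a <;> simp only [count_mapCount, count_add, count_nsmul] <;> grind

theorem forall_count_add_two_nsmul_le_three_iff {μ κ : Multiset α} (hμ : μ.Nodup) :
    (∀ a, count a (μ + 2 • κ) ≤ 3) ↔ κ.Nodup := by
  simp only [count_add, count_nsmul, nodup_iff_count_le_one]
  exact forall_congr' fun a => by have := nodup_iff_count_le_one.1 hμ a; omega

noncomputable def countLeThreeEquiv [AddCommMonoid α] (P : α → Prop) (n : α) :
    {s : Multiset α // (∀ a ∈ s, P a) ∧ (∀ a, count a s ≤ 3) ∧ s.sum = n} ≃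
      {p : Multiset α × Multiset α // ((∀ a ∈ p.1, P a) ∧ p.1.Nodup) ∧
        ((∀ a ∈ p.2, P a) ∧ p.2.Nodup) ∧ p.1.sum + 2 • p.2.sum = n} :=
  (equivNodupAddTwoNsmul.symm.subtypeEquiv fun ⟨(μ, κ), hμ⟩ => by
    rw [equivNodupAddTwoNsmul_symm_apply, forall_count_add_two_nsmul_le_three_iff hμ]
    simp only [hμ, and_true, mem_add, mem_nsmul, ne_eq, OfNat.ofNat_ne_zero, not_false_eq_true,
      true_and, or_imp, forall_and, sum_add, sum_nsmul]
    tauto).symm.trans (Equiv.subtypeSubtypeEquivSubtype fun h => h.1.2)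

end Decomposition

theorem finite_of_forall_pos_of_sum_eq {P : Multiset ℕ → Prop} {k : ℕ}
    (hP : ∀ s, P s → (∀ i ∈ s, 0 < i) ∧ s.sum = k) : Finite {s // P s} :=
  Finite.of_injective (fun s => (⟨s.1, (hP s.1 s.2).1 _, (hP s.1 s.2).2⟩ : k.Partition))
    fun _ _ h => Subtype.ext (congrArg Nat.Partition.parts h)

theorem map_two_mul_map_div_two {ν : Multiset ℕ} (h : ∀ i ∈ ν, Even i) :
    (ν.map (· / 2)).map (2 * ·) = ν := by
  rw [map_map]
  exact (map_congr rfl fun i hi => Nat.two_mul_div_two_of_even (h i hi)).trans (map_id ν)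

def mapTwoMulEquiv (j : ℕ) :
    {κ : Multiset ℕ // ((∀ i ∈ κ, Odd i) ∧ κ.Nodup) ∧ 2 * κ.sum = j} ≃
      {ν : Multiset ℕ // (∀ i ∈ ν, i % 4 = 2) ∧ ν.Nodup ∧ ν.sum = j} where
  toFun κ := ⟨κ.1.map (2 * ·), by
    obtain ⟨κ, ⟨hodd, hκ⟩, hsum⟩ := κ
    refine ⟨forall_mem_map_iff.2 fun i hi =>
      (Nat.two_mul_mod_four_eq_two_iff_odd i).2 (hodd i hi),
      hκ.map fun _ _ => by omega, by rwa [sum_map_mul_left, map_id']⟩⟩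
  invFun ν := ⟨ν.1.map (· / 2), by
    obtain ⟨ν, hmod, hν, rfl⟩ := ν
    have heven : ∀ i ∈ ν, Even i := fun i hi => by have := hmod i hi; grind
    refine ⟨⟨forall_mem_map_iff.2 fun i hi => ?_, hν.map_on fun x hx y hy h => ?_⟩, ?_⟩
    · rw [← Nat.two_mul_mod_four_eq_two_iff_odd]; have := hmod i hi; omega
    · have := hmod x hx; have := hmod y hy; omega
    · conv_rhs => rw [← map_two_mul_map_div_two heven]
      rw [sum_map_mul_left, map_id']⟩
  left_inv κ := Subtype.ext <| by
    simp only [map_map]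
    exact (map_congr rfl fun i _ => by simp).trans (map_id _)
  right_inv ν := Subtype.ext <| map_two_mul_map_div_two fun i hi => by
    have := ν.2.1 i hi; grind

end Multiset

open Multiset

/-- The number of partitions of `n` into odd parts with each part size occurring at most
three times equals the sum over `i + j = n` of (number of partitions of `i` into distinct
odd parts) times (number of partitions of `j` into distinct parts `≡ 2 (mod 4)`). -/
theorem oddM3_eq_conv_distinctOdd_distinctTwoModFour (n : ℕ) :
    Nat.card {lam : Multiset ℕ //
      (∀ i ∈ lam, Odd i) ∧ (∀ i, lam.count i ≤ 3) ∧ lam.sum = n} =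
    ∑ p ∈ Finset.HasAntidiagonal.antidiagonal n,
      Nat.card {mu : Multiset ℕ //
        (∀ i ∈ mu, Odd i) ∧ mu.Nodup ∧ mu.sum = p.1} *
      Nat.card {nu : Multiset ℕ //
        (∀ i ∈ nu, i % 4 = 2) ∧ nu.Nodup ∧ nu.sum = p.2} := by
  have (k : ℕ) : Finite {s : Multiset ℕ // ((∀ i ∈ s, Odd i) ∧ s.Nodup) ∧ s.sum = k} :=
    finite_of_forall_pos_of_sum_eq fun s hs => ⟨fun i hi => (hs.1.1 i hi).pos, hs.2⟩
  have (j : ℕ) : Finite {ν : Multiset ℕ // (∀ i ∈ ν, i % 4 = 2) ∧ ν.Nodup ∧ ν.sum = j} :=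
    finite_of_forall_pos_of_sum_eq fun s hs =>
      ⟨fun i hi => by have := hs.1 i hi; omega, hs.2.2⟩
  have (j : ℕ) := Finite.of_equiv _ (mapTwoMulEquiv j).symm
  rw [Nat.card_congr (countLeThreeEquiv Odd n)]
  simp only [smul_eq_mul]
  rw [Nat.card_subtype_prod_eq_sum_antidiagonal (fun μ => (∀ i ∈ μ, Odd i) ∧ μ.Nodup)
    (fun κ => (∀ i ∈ κ, Odd i) ∧ κ.Nodup) sum (2 * sum ·)]
  refine Finset.sum_congr rfl fun p _ => ?_
  rw [Nat.card_congr (mapTwoMulEquiv p.2)]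
  simp only [and_assoc]
end

section
/- For every natural number n, the total number of partitions of n equals the sum over all i + j = n of (the number of partitions of i in which every part size occurs at most three times) times (the number of partitions of j into parts divisible by 4). -/
/-!
Write each multiplicity `m` of a part `a` as `m = r + k q` with `r < k`. Keeping `r` copies of `a`
gives a partition whose multiplicities are all below `k`; merging the other `k q` copies into `q`
parts `k a` gives a partition into multiples of `k`. This is a size-preserving bijection (here
`k = 4`), so the partition count is the convolution of the two restricted counts.
-/

open Finset Multiset

theorem Nat.card_subtype_add_eq_sum_antidiagonal {X Y M : Type*} [AddMonoid M]
    [HasAntidiagonal M] (f : X → M) (g : Y → M) (n : M)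
    [∀ m, Finite {x // f x = m}] [∀ m, Finite {y // g y = m}] :
    Nat.card {z : X × Y // f z.1 + g z.2 = n} =
      ∑ p ∈ antidiagonal n, Nat.card {x // f x = p.1} * Nat.card {y // g y = p.2} := by
  have fiber (c : M × M) : {z : X × Y // (f z.1, g z.2) = c} ≃
      {x // f x = c.1} × {y // g y = c.2} :=
    (Equiv.subtypeEquivRight fun _ => Prod.ext_iff).trans
      (Equiv.subtypeProdEquivProd (p := (f · = c.1)) (q := (g · = c.2)))
  have (c : M × M) := Finite.of_equiv _ (fiber c).symm
  rw [← Nat.card_congr (Equiv.sigmaSubtypeFiberEquivSubtype (fun z : X × Y => (f z.1, g z.2))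
    (q := (· ∈ antidiagonal n)) fun z => mem_antidiagonal.symm), Nat.card_sigma]
  simp only [Nat.card_congr (fiber _), Nat.card_prod]
  exact sum_coe_sort _ fun p : M × M => Nat.card {x // f x = p.1} * Nat.card {y // g y = p.2}

namespace Multiset

variable {α : Type*} [DecidableEq α] (k : ℕ)

noncomputable def countMod (s : Multiset α) : Multiset α :=
  toFinsupp.symm (s.toFinsupp.mapRange (· % k) (Nat.zero_mod k))

noncomputable def countDiv (s : Multiset α) : Multiset α :=
  toFinsupp.symm (s.toFinsupp.mapRange (· / k) (Nat.zero_div k))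

@[simp]
theorem count_countMod (s : Multiset α) (a : α) : (countMod k s).count a = s.count a % k := by
  simp [countMod]

@[simp]
theorem count_countDiv (s : Multiset α) (a : α) : (countDiv k s).count a = s.count a / k := by
  simp [countDiv]

theorem countMod_le (s : Multiset α) : countMod k s ≤ s :=
  le_iff_count.2 fun a => by simpa using Nat.mod_le _ k

theorem countDiv_le (s : Multiset α) : countDiv k s ≤ s :=
  le_iff_count.2 fun a => by simpa using Nat.div_le_self _ k

theorem countMod_add_nsmul_countDiv (s : Multiset α) : countMod k s + k • countDiv k s = s := by
  ext a
  simp [Nat.mod_add_div]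

variable {k}

theorem count_countMod_lt (hk : 0 < k) (s : Multiset α) (a : α) : (countMod k s).count a < k := by
  simpa using Nat.mod_lt _ hk

theorem countMod_add_nsmul {μ : Multiset α} (hμ : ∀ a, μ.count a < k) (q : Multiset α) :
    countMod k (μ + k • q) = μ := by
  ext a
  simp [Nat.add_mul_mod_self_left, Nat.mod_eq_of_lt (hμ a)]

theorem countDiv_add_nsmul {μ : Multiset α} (hμ : ∀ a, μ.count a < k) (q : Multiset α) :
    countDiv k (μ + k • q) = q := by
  ext a
  simp [Nat.add_mul_div_left _ _ (Nat.zero_lt_of_lt (hμ a)), Nat.div_eq_of_lt (hμ a)]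

theorem map_div_map_mul (hk : 0 < k) (q : Multiset ℕ) : (q.map (k * ·)).map (· / k) = q := by
  simp [map_map, Nat.mul_div_cancel_left _ hk]

theorem map_mul_map_div {ν : Multiset ℕ} (hν : ∀ i ∈ ν, k ∣ i) :
    (ν.map (· / k)).map (k * ·) = ν := by
  rw [map_map]
  exact (map_congr rfl fun i hi => Nat.mul_div_cancel' (hν i hi)).trans (map_id ν)

noncomputable def countModDivEquiv (hk : 0 < k) :
    {s : Multiset ℕ // ∀ i ∈ s, 0 < i} ≃
      {μ : Multiset ℕ // (∀ i ∈ μ, 0 < i) ∧ ∀ i, μ.count i < k} ×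
      {ν : Multiset ℕ // (∀ i ∈ ν, 0 < i) ∧ ∀ i ∈ ν, k ∣ i} where
  toFun s :=
    (⟨countMod k s.1, fun i hi => s.2 i (mem_of_le (countMod_le k s.1) hi),
      count_countMod_lt hk s.1⟩,
     ⟨(countDiv k s.1).map (k * ·), by
        simp only [mem_map, forall_exists_index, and_imp, forall_apply_eq_imp_iff₂]
        exact ⟨fun i hi => Nat.mul_pos hk (s.2 i (mem_of_le (countDiv_le k s.1) hi)),
          fun i _ => dvd_mul_right k i⟩⟩)
  invFun z := ⟨z.1 + k • z.2.1.map (· / k), by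
    obtain ⟨⟨μ, hμ, -⟩, ⟨ν, hν, hdvd⟩⟩ := z
    simp only [mem_add, mem_nsmul, mem_map]
    rintro i (hi | ⟨-, j, hj, rfl⟩)
    · exact hμ i hi
    · exact Nat.div_pos (Nat.le_of_dvd (hν j hj) (hdvd j hj)) hk⟩
  left_inv s := Subtype.ext <| by
    simp only [map_div_map_mul hk, countMod_add_nsmul_countDiv]
  right_inv z := by
    obtain ⟨⟨μ, -, hμ⟩, ⟨ν, -, hdvd⟩⟩ := z
    ext : 2
    · exact countMod_add_nsmul hμ _
    · simp only [countDiv_add_nsmul hμ, map_mul_map_div hdvd]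

theorem sum_countModDivEquiv (hk : 0 < k) (s : {s : Multiset ℕ // ∀ i ∈ s, 0 < i}) :
    (countModDivEquiv hk s).1.1.sum + (countModDivEquiv hk s).2.1.sum = s.1.sum := by
  have hν : ((countDiv k s.1).map (k * ·)).sum = k * (countDiv k s.1).sum := by
    simpa using sum_map_mul_left (a := k) (f := id) (s := countDiv k s.1)
  conv_rhs => rw [← countMod_add_nsmul_countDiv k s.1, sum_add, sum_nsmul, smul_eq_mul, ← hν]
  rfl

theorem finite_subtype_sum_eq_of_pos {P : Multiset ℕ → Prop} (hP : ∀ s, P s → ∀ i ∈ s, 0 < i)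
    (n : ℕ) : Finite {s : Subtype P // s.1.sum = n} :=
  Finite.of_injective (fun s => (⟨s.1.1, hP _ s.1.2 _, s.2⟩ : Nat.Partition n))
    fun _ _ h => Subtype.ext (Subtype.ext (congrArg Nat.Partition.parts h))

end Multiset

/-- The total number of partitions of `n` equals the sum over `i + j = n` of
(number of partitions of `i` with each part size occurring at most three times) times
(number of partitions of `j` into parts divisible by `4`). -/
theorem partitions_eq_conv_M3_fourDiv (n : ℕ) :
    Nat.card {lam : Multiset ℕ // (∀ i ∈ lam, 0 < i) ∧ lam.sum = n} =
    ∑ p ∈ Finset.HasAntidiagonal.antidiagonal n,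
      Nat.card {mu : Multiset ℕ //
        (∀ i ∈ mu, 0 < i) ∧ (∀ i, mu.count i ≤ 3) ∧ mu.sum = p.1} *
      Nat.card {nu : Multiset ℕ //
        (∀ i ∈ nu, 0 < i) ∧ (∀ i ∈ nu, 4 ∣ i) ∧ nu.sum = p.2} := by
  have card_fiber (P : Multiset ℕ → Prop) (m : ℕ) :
      Nat.card {x : Subtype P // x.1.sum = m} = Nat.card {s // P s ∧ s.sum = m} :=
    Nat.card_congr (Equiv.subtypeSubtypeEquivSubtypeInter P (·.sum = m))
  have := finite_subtype_sum_eq_of_pos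
    (P := fun μ => (∀ i ∈ μ, 0 < i) ∧ ∀ i, μ.count i < 4) fun _ h => h.1
  have := finite_subtype_sum_eq_of_pos
    (P := fun ν => (∀ i ∈ ν, 0 < i) ∧ ∀ i ∈ ν, 4 ∣ i) fun _ h => h.1
  rw [← card_fiber, Nat.card_congr ((countModDivEquiv (k := 4) (by norm_num)).subtypeEquiv
      (q := fun z => z.1.1.sum + z.2.1.sum = n) fun s => by rw [sum_countModDivEquiv]),
    Nat.card_subtype_add_eq_sum_antidiagonal
      (fun x : {μ : Multiset ℕ // _} => x.1.sum) (fun y : {ν : Multiset ℕ // _} => y.1.sum)]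
  simp only [card_fiber, and_assoc, Nat.lt_succ_iff]
end

section
/- Let m ≥ 2 be an integer. For natural numbers n and ℓ, let A(n, ℓ) denote the number of finite sets S of pairs (k, c) of natural numbers with 1 ≤ c ≤ m^k for every (k, c) ∈ S, such that Σ_{(k,c)∈S} m^k = n and |S| = ℓ (colored m-ary strict partitions of weight n with ℓ parts). Then for all natural numbers n and ℓ, A(mn, ℓ) equals the sum over all m-tuples (n₁, …, n_m) and (ℓ₁, …, ℓ_m) of nonnegative integers with n₁ + ⋯ + n_m = n and ℓ₁ + ⋯ + ℓ_m = ℓ of the product A(n₁, ℓ₁)⋯A(n_m, ℓ_m). In particular, the sequence a_m(n) = Σ_ℓ A(n, ℓ) is m-convolutive. -/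
/-!
Every colored part has size at least `1`, and the only part of size `1` is `(0, 1)`; so a
partition of a multiple of `m ≥ 2` has no part of size `1`. A part `(k + 1, c)` is then
recorded as the pair of the digit `(c - 1) % m` and the part `(k, (c - 1) / m + 1)` of size
`m ^ k`. Sorting the parts by digit splits a partition of `m * n` with `ℓ` parts into an
`m`-tuple of partitions whose weights add up to `n` and whose part counts add up to `ℓ`, and
this is a bijection. Summing over `ℓ` gives the `m`-convolutivity, since no partition has more
parts than its weight.
-/

open Finset Fintype Finset.Nat Function

theorem card_biUnion_piFinset_antidiagonalTuple {β : Type*} [DecidableEq β]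
    (F : ℕ → ℕ → Finset β) (hF : Pairwise (Disjoint on F.uncurry)) (k n ℓ : ℕ) :
    #((antidiagonalTuple k n ×ˢ antidiagonalTuple k ℓ).biUnion
        fun ts => piFinset fun i => F (ts.1 i) (ts.2 i)) =
      ∑ t ∈ antidiagonalTuple k n, ∑ s ∈ antidiagonalTuple k ℓ, ∏ i, #(F (t i) (s i)) := by
  rw [card_biUnion, sum_product]
  · simp only [card_piFinset]
  · rintro ⟨t, s⟩ - ⟨t', s'⟩ - hne
    obtain ⟨i, hi⟩ : ∃ i, (t i, s i) ≠ (t' i, s' i) := by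
      by_contra! h
      exact hne (Prod.ext (funext fun i => congrArg Prod.fst (h i))
        (funext fun i => congrArg Prod.snd (h i)))
    exact piFinset_disjoint_of_disjoint _ _ (hF hi)

theorem sum_range_sum_antidiagonalTuple_prod {R : Type*} [CommSemiring R] {k N : ℕ}
    (t : Fin k → ℕ) (ht : ∑ i, t i ≤ N) (f : Fin k → ℕ → R) (hf : ∀ i b, t i < b → f i b = 0) :
    ∑ ℓ ∈ range (N + 1), ∑ s ∈ antidiagonalTuple k ℓ, ∏ i, f i (s i) =
      ∏ i, ∑ b ∈ range (t i + 1), f i b := by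
  have hbound : ∀ s ∈ piFinset fun i => range (t i + 1), ∑ i, s i ∈ range (N + 1) := by
    intro s hs
    simp only [mem_piFinset, mem_range, Nat.lt_succ_iff] at hs
    exact mem_range.2 (Nat.lt_succ_of_le ((sum_le_sum fun i _ => hs i).trans ht))
  rw [prod_univ_sum, ← sum_fiberwise_of_maps_to hbound]
  refine sum_congr rfl fun ℓ _ => (sum_subset (fun s hs => ?_) fun s _ hs => ?_).symm
  · exact mem_antidiagonalTuple.2 (mem_filter.1 hs).2
  · obtain ⟨i, hi⟩ : ∃ i, t i < s i := by
      by_contra! h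
      simp_all [mem_antidiagonalTuple]
    exact prod_eq_zero (mem_univ i) (hf i _ hi)

namespace ColoredPartition

variable {m : ℕ}

def coloredParts (m : ℕ) : Set (ℕ × ℕ) := {p | 1 ≤ p.2 ∧ p.2 ≤ m ^ p.1}

def weight (m : ℕ) (S : Finset (ℕ × ℕ)) : ℕ := ∑ p ∈ S, m ^ p.1

lemma card_le_weight (hm : 0 < m) (S : Finset (ℕ × ℕ)) : #S ≤ weight m S :=
  card_eq_sum_ones S ▸ sum_le_sum fun _ _ => Nat.one_le_pow _ _ hm

lemma eq_zero_one_of_fst_eq_zero {p : ℕ × ℕ} (hp : p ∈ coloredParts m) (h : p.1 = 0) :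
    p = (0, 1) := by
  obtain ⟨h1, h2⟩ := hp
  rw [h, pow_zero] at h2
  exact Prod.ext h (le_antisymm h2 h1)

lemma fst_ne_zero_of_dvd_weight (hm : 2 ≤ m) {S : Finset (ℕ × ℕ)} (hS : ↑S ⊆ coloredParts m)
    (hdvd : m ∣ weight m S) : ∀ p ∈ S, p.1 ≠ 0 := by
  intro p hp hp₀
  obtain rfl := eq_zero_one_of_fst_eq_zero (hS hp) hp₀
  have hrest : m ∣ weight m (S.erase (0, 1)) := dvd_sum fun q hq => dvd_pow_self m fun hq₀ =>
    ne_of_mem_erase hq (eq_zero_one_of_fst_eq_zero (hS (mem_of_mem_erase hq)) hq₀)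
  rw [weight, ← add_sum_erase S _ hp, pow_zero] at hdvd
  have := Nat.le_of_dvd one_pos ((Nat.dvd_add_left hrest).1 hdvd)
  omega

lemma subset_range_product (hm : 2 ≤ m) {S : Finset (ℕ × ℕ)} (hS : ↑S ⊆ coloredParts m) :
    S ⊆ range (weight m S + 1) ×ˢ range (weight m S + 1) := by
  intro p hp
  have hpow : m ^ p.1 ≤ weight m S := single_le_sum (fun q _ => Nat.zero_le (m ^ q.1)) hp
  have hexp : p.1 < m ^ p.1 := Nat.lt_pow_self hm
  have hcolor := (hS hp).2
  simp only [mem_product, mem_range]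
  omega

open Classical in
noncomputable def coloredPartitions (m n ℓ : ℕ) : Finset (Finset (ℕ × ℕ)) :=
  {S ∈ (range (n + 1) ×ˢ range (n + 1)).powerset |
    ↑S ⊆ coloredParts m ∧ weight m S = n ∧ #S = ℓ}

lemma mem_coloredPartitions (hm : 2 ≤ m) {n ℓ : ℕ} {S : Finset (ℕ × ℕ)} :
    S ∈ coloredPartitions m n ℓ ↔ ↑S ⊆ coloredParts m ∧ weight m S = n ∧ #S = ℓ := by
  classical
  rw [coloredPartitions, mem_filter, mem_powerset, and_iff_right_iff_imp]
  rintro ⟨hS, rfl, -⟩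
  exact subset_range_product hm hS

lemma natCard_eq_card_coloredPartitions (hm : 2 ≤ m) (n ℓ : ℕ) :
    Nat.card {S : Finset (ℕ × ℕ) // ↑S ⊆ coloredParts m ∧ weight m S = n ∧ #S = ℓ} =
      #(coloredPartitions m n ℓ) := by
  rw [← Nat.card_eq_finsetCard]
  exact Nat.card_congr (Equiv.subtypeEquivRight fun S => (mem_coloredPartitions hm).symm)

lemma coloredPartitions_eq_empty (hm : 2 ≤ m) {n ℓ : ℕ} (h : n < ℓ) :
    coloredPartitions m n ℓ = ∅ :=
  eq_empty_of_forall_notMem fun S hS => by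
    obtain ⟨-, hw, hc⟩ := (mem_coloredPartitions hm).1 hS
    have := card_le_weight (by omega : 0 < m) S
    omega

lemma pairwise_disjoint_coloredPartitions (hm : 2 ≤ m) :
    Pairwise (Disjoint on (coloredPartitions m).uncurry) := by
  rintro ⟨n, ℓ⟩ ⟨n', ℓ'⟩ hne
  refine disjoint_left.2 fun S hS hS' => hne ?_
  obtain ⟨-, rfl, rfl⟩ := (mem_coloredPartitions hm).1 hS
  obtain ⟨-, rfl, rfl⟩ := (mem_coloredPartitions hm).1 hS'
  rfl

def raise (m i : ℕ) (p : ℕ × ℕ) : ℕ × ℕ := (p.1 + 1, (p.2 - 1) * m + i + 1)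

def lower (m : ℕ) (p : ℕ × ℕ) : ℕ × ℕ := (p.1 - 1, (p.2 - 1) / m + 1)

def digit (m : ℕ) (p : ℕ × ℕ) : ℕ := (p.2 - 1) % m

lemma lower_raise {i : ℕ} (hi : i < m) {p : ℕ × ℕ} (hp : 1 ≤ p.2) :
    lower m (raise m i p) = p := by
  have h : ((p.2 - 1) * m + i) / m = p.2 - 1 := by
    rw [Nat.mul_comm, Nat.mul_add_div (by omega), Nat.div_eq_of_lt hi, Nat.add_zero]
  ext
  · simp [lower, raise]
  · simp only [lower, raise, Nat.add_sub_cancel, h]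
    omega

lemma digit_raise {i : ℕ} (hi : i < m) (p : ℕ × ℕ) : digit m (raise m i p) = i := by
  simp [digit, raise, Nat.mod_eq_of_lt hi]

lemma raise_digit_lower {p : ℕ × ℕ} (h1 : 1 ≤ p.1) (h2 : 1 ≤ p.2) :
    raise m (digit m p) (lower m p) = p := by
  have h := Nat.div_add_mod' (p.2 - 1) m
  ext <;> simp [raise, lower, digit] <;> omega

lemma raise_mem_coloredParts {i : ℕ} (hi : i < m) {p : ℕ × ℕ} (hp : p ∈ coloredParts m) :
    raise m i p ∈ coloredParts m := by
  obtain ⟨h1, h2⟩ := hp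
  have : (p.2 - 1 + 1) * m ≤ m ^ p.1 * m := Nat.mul_le_mul_right _ (by omega)
  refine ⟨by simp [raise], ?_⟩
  simp only [raise, pow_succ, Nat.add_one_mul] at this ⊢
  omega

lemma lower_mem_coloredParts (hm : 0 < m) {k c : ℕ} (hp : (k + 1, c) ∈ coloredParts m) :
    lower m (k + 1, c) ∈ coloredParts m := by
  obtain ⟨h1, h2⟩ : 1 ≤ c ∧ c ≤ m ^ (k + 1) := hp
  have : (c - 1) / m < m ^ k := by
    rw [Nat.div_lt_iff_lt_mul hm, ← pow_succ]
    omega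
  exact ⟨by simp [lower], by simp only [lower, Nat.add_sub_cancel]; omega⟩

lemma injOn_raise {i : ℕ} (hi : i < m) : Set.InjOn (raise m i) (coloredParts m) :=
  Set.LeftInvOn.injOn fun _ hp => lower_raise hi hp.1

def split (m : ℕ) (S : Finset (ℕ × ℕ)) (i : Fin m) : Finset (ℕ × ℕ) :=
  {p ∈ S | digit m p = i}.image (lower m)

def glue (m : ℕ) (f : Fin m → Finset (ℕ × ℕ)) : Finset (ℕ × ℕ) :=
  univ.biUnion fun i => (f i).image (raise m i)

variable {f : Fin m → Finset (ℕ × ℕ)} {S : Finset (ℕ × ℕ)}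

lemma mem_glue {p : ℕ × ℕ} : p ∈ glue m f ↔ ∃ i, ∃ q ∈ f i, raise m i q = p := by
  simp [glue]

lemma pairwiseDisjoint_image_raise (f : Fin m → Finset (ℕ × ℕ)) :
    (↑(univ : Finset (Fin m)) : Set (Fin m)).PairwiseDisjoint
      fun i => (f i).image (raise m i) := by
  intro i _ j _ hij
  refine disjoint_left.2 fun p hpi hpj => hij ?_
  obtain ⟨q, -, rfl⟩ := mem_image.1 hpi
  obtain ⟨q', -, hq'⟩ := mem_image.1 hpj
  have := congrArg (digit m) hq'
  rw [digit_raise j.isLt, digit_raise i.isLt] at this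
  exact Fin.ext this.symm

lemma glue_subset_coloredParts (hf : ∀ i, ↑(f i) ⊆ coloredParts m) :
    ↑(glue m f) ⊆ coloredParts m := by
  intro p hp
  obtain ⟨i, q, hq, rfl⟩ := mem_glue.1 hp
  exact raise_mem_coloredParts i.isLt (hf i hq)

lemma card_glue (hf : ∀ i, ↑(f i) ⊆ coloredParts m) : #(glue m f) = ∑ i, #(f i) := by
  rw [glue, card_biUnion (pairwiseDisjoint_image_raise f)]
  exact sum_congr rfl fun i _ => card_image_of_injOn ((injOn_raise i.isLt).mono (hf i))

lemma weight_glue (hf : ∀ i, ↑(f i) ⊆ coloredParts m) :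
    weight m (glue m f) = m * ∑ i, weight m (f i) := by
  rw [weight, glue, sum_biUnion (pairwiseDisjoint_image_raise f), mul_sum]
  refine sum_congr rfl fun i _ => ?_
  rw [sum_image ((injOn_raise i.isLt).mono (hf i)), weight, mul_sum]
  simp [raise, pow_succ, mul_comm]

lemma split_glue (hf : ∀ i, ↑(f i) ⊆ coloredParts m) : split m (glue m f) = f := by
  ext i q
  simp only [split, mem_image, mem_filter, mem_glue]
  constructor
  · rintro ⟨_, ⟨⟨j, r, hr, rfl⟩, hd⟩, rfl⟩
    obtain rfl : j = i := Fin.ext ((digit_raise j.isLt r).symm.trans hd)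
    rwa [lower_raise j.isLt (hf j hr).1]
  · intro hq
    exact ⟨raise m i q, ⟨⟨i, q, hq, rfl⟩, digit_raise i.isLt q⟩, lower_raise i.isLt (hf i hq).1⟩

lemma glue_split (hm : 0 < m) (hS : ↑S ⊆ coloredParts m) (hS₀ : ∀ p ∈ S, p.1 ≠ 0) :
    glue m (split m S) = S := by
  ext p
  simp only [split, mem_glue, mem_image, mem_filter]
  constructor
  · rintro ⟨i, _, ⟨q, ⟨hq, hd⟩, rfl⟩, rfl⟩
    rwa [← hd, raise_digit_lower (Nat.one_le_iff_ne_zero.2 (hS₀ q hq)) (hS hq).1]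
  · intro hp
    exact ⟨⟨digit m p, Nat.mod_lt _ hm⟩, lower m p, ⟨p, ⟨hp, rfl⟩, rfl⟩,
      raise_digit_lower (Nat.one_le_iff_ne_zero.2 (hS₀ p hp)) (hS hp).1⟩

lemma split_subset_coloredParts (hm : 0 < m) (hS : ↑S ⊆ coloredParts m)
    (hS₀ : ∀ p ∈ S, p.1 ≠ 0) (i : Fin m) : ↑(split m S i) ⊆ coloredParts m := by
  intro q hq
  simp only [split, coe_image, coe_filter, Set.mem_image] at hq
  obtain ⟨⟨k, c⟩, ⟨hp, -⟩, rfl⟩ := hq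
  obtain ⟨k, rfl⟩ := Nat.exists_eq_succ_of_ne_zero (hS₀ _ hp)
  exact lower_mem_coloredParts hm (hS hp)

lemma mem_biUnion_piFinset_coloredPartitions (hm : 2 ≤ m) {k n ℓ : ℕ}
    {f : Fin k → Finset (ℕ × ℕ)} :
    f ∈ (antidiagonalTuple k n ×ˢ antidiagonalTuple k ℓ).biUnion
        (fun ts => piFinset fun i => coloredPartitions m (ts.1 i) (ts.2 i)) ↔
      (∀ i, ↑(f i) ⊆ coloredParts m) ∧ ∑ i, weight m (f i) = n ∧ ∑ i, #(f i) = ℓ := by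
  simp only [mem_biUnion, mem_product, mem_antidiagonalTuple, mem_piFinset,
    mem_coloredPartitions hm, Prod.exists]
  constructor
  · rintro ⟨t, s, ⟨rfl, rfl⟩, hf⟩
    exact ⟨fun i => (hf i).1, sum_congr rfl fun i _ => (hf i).2.1,
      sum_congr rfl fun i _ => (hf i).2.2⟩
  · rintro ⟨hf, hw, hc⟩
    exact ⟨_, _, ⟨hw, hc⟩, fun i => ⟨hf i, rfl, rfl⟩⟩

theorem card_coloredPartitions_mul (hm : 2 ≤ m) (n ℓ : ℕ) :
    #(coloredPartitions m (m * n) ℓ) =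
      #((antidiagonalTuple m n ×ˢ antidiagonalTuple m ℓ).biUnion
        fun ts => piFinset fun i => coloredPartitions m (ts.1 i) (ts.2 i)) := by
  have hm₀ : 0 < m := by omega
  refine card_nbij' (split m) (glue m) (fun S hS => ?_) (fun f hf => ?_)
    (fun S hS => ?_) (fun f hf => ?_)
  · obtain ⟨hS, hw, hc⟩ := (mem_coloredPartitions hm).1 hS
    have hS₀ := fst_ne_zero_of_dvd_weight hm hS (hw ▸ dvd_mul_right m n)
    have hsplit := split_subset_coloredParts hm₀ hS hS₀
    have hglue := glue_split hm₀ hS hS₀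
    refine (mem_biUnion_piFinset_coloredPartitions hm).2 ⟨hsplit, ?_, ?_⟩
    · rw [← hglue, weight_glue hsplit] at hw
      exact Nat.eq_of_mul_eq_mul_left hm₀ hw
    · rw [← card_glue hsplit, hglue, hc]
  · obtain ⟨hf, hw, hc⟩ := (mem_biUnion_piFinset_coloredPartitions hm).1 hf
    exact (mem_coloredPartitions hm).2
      ⟨glue_subset_coloredParts hf, by rw [weight_glue hf, hw], by rw [card_glue hf, hc]⟩
  · obtain ⟨hS, hw, -⟩ := (mem_coloredPartitions hm).1 hS
    exact glue_split hm₀ hS (fst_ne_zero_of_dvd_weight hm hS (hw ▸ dvd_mul_right m n))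
  · exact split_glue ((mem_biUnion_piFinset_coloredPartitions hm).1 hf).1

end ColoredPartition

open ColoredPartition in
/-- Let `m ≥ 2` and let `A n ℓ` be the number of colored `m`-ary strict partitions of
weight `n` with `ℓ` parts, i.e. finite sets `S` of pairs `(k, c)` with `1 ≤ c ≤ m ^ k`,
`∑_{(k,c) ∈ S} m ^ k = n`, and `|S| = ℓ`. Then
`A (m * n) ℓ = ∑_{n₁+⋯+n_m = n} ∑_{ℓ₁+⋯+ℓ_m = ℓ} A n₁ ℓ₁ * ⋯ * A n_m ℓ_m`, and in
particular the sequence `a_m n = ∑_ℓ A n ℓ` is `m`-convolutive. -/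
theorem colored_mary_strict_partitions_m_convolutive (m : ℕ) (hm : 2 ≤ m)
    (A : ℕ → ℕ → ℕ)
    (hA : ∀ n ℓ, A n ℓ = Nat.card {S : Finset (ℕ × ℕ) //
      (∀ p ∈ S, 1 ≤ p.2 ∧ p.2 ≤ m ^ p.1) ∧
      (∑ p ∈ S, m ^ p.1) = n ∧ S.card = ℓ}) :
    (∀ n ℓ, A (m * n) ℓ =
      ∑ t ∈ Finset.Nat.antidiagonalTuple m n,
        ∑ s ∈ Finset.Nat.antidiagonalTuple m ℓ, ∏ i, A (t i) (s i)) ∧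
    (∀ n, (∑ ℓ ∈ Finset.range (m * n + 1), A (m * n) ℓ) =
      ∑ t ∈ Finset.Nat.antidiagonalTuple m n,
        ∏ i, ∑ ℓ ∈ Finset.range (t i + 1), A (t i) ℓ) := by
  have hA' : ∀ n ℓ, A n ℓ = #(coloredPartitions m n ℓ) := fun n ℓ =>
    (hA n ℓ).trans (natCard_eq_card_coloredPartitions hm n ℓ)
  have hconv : ∀ n ℓ, A (m * n) ℓ =
      ∑ t ∈ antidiagonalTuple m n, ∑ s ∈ antidiagonalTuple m ℓ, ∏ i, A (t i) (s i) := by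
    intro n ℓ
    simp only [hA', card_coloredPartitions_mul hm,
      card_biUnion_piFinset_antidiagonalTuple _ (pairwise_disjoint_coloredPartitions hm)]
  refine ⟨hconv, fun n => ?_⟩
  simp only [hconv]
  rw [sum_comm]
  refine sum_congr rfl fun t ht => sum_range_sum_antidiagonalTuple_prod t ?_ _ fun i b hb => ?_
  · rw [mem_antidiagonalTuple.1 ht]
    exact Nat.le_mul_of_pos_left n (by omega)
  · rw [hA', coloredPartitions_eq_empty hm hb, Finset.card_empty]
end
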